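/- arXiv:2408.10875 — 3 statements merged into one kernel-verified Lean document; each statement's English description precedes it below -/
import Mathlib

section
/- Let I be a standard dyadic partition of [0,1]. If B ∈ S(I) is not a subinterval of I (i.e., B is not of the form [a_i, a_{i+1}] for consecutive breakpoints), then there exists A ∈ S(I) with A ≠ [0,1] such that B = A ∪ Ā. -/
/-- `IsSD l r` means `[l, r]` is a standard dyadic interval
`[k/2^m, (k+1)/2^m] ⊆ [0,1]` with `m ≥ 0`, `0 ≤ k ≤ 2^m - 1`. -/
def IsSD (l r : ℚ) : Prop :=
  ∃ m k : ℕ, k < 2 ^ m ∧ l = (k : ℚ) / 2 ^ m ∧ r = ((k : ℚ) + 1) / 2 ^ m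

/-- A left standard dyadic interval: `[k/2^m, (k+1)/2^m]` with `m ≥ 1` and `k` even. -/
def IsLeftSD (l r : ℚ) : Prop :=
  ∃ m k : ℕ, 1 ≤ m ∧ k < 2 ^ m ∧ Even k ∧
    l = (k : ℚ) / 2 ^ m ∧ r = ((k : ℚ) + 1) / 2 ^ m

/-- A right standard dyadic interval: `[k/2^m, (k+1)/2^m]` with `m ≥ 1` and `k` odd;
by convention `[0,1]` is also regarded as a right standard dyadic interval. -/
def IsRightSD (l r : ℚ) : Prop :=
  (l = 0 ∧ r = 1) ∨
    ∃ m k : ℕ, 1 ≤ m ∧ k < 2 ^ m ∧ Odd k ∧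
      l = (k : ℚ) / 2 ^ m ∧ r = ((k : ℚ) + 1) / 2 ^ m

/-- The set `S` of all standard dyadic intervals, an interval `[l, r]` being
represented by the pair `(l, r)` of its endpoints. -/
def SDSet : Set (ℚ × ℚ) := {A | IsSD A.1 A.2}

/-- The conjugate `Ā` of a standard dyadic interval `A ≠ [0,1]`:
the adjacent standard dyadic interval of the same length, on the right of `A`
if `A` is left, and on the left of `A` if `A` is right. -/
noncomputable def conjSD (A : ℚ × ℚ) : ℚ × ℚ := by
  classical
  exact if IsLeftSD A.1 A.2 then (A.2, 2 * A.2 - A.1) else (2 * A.1 - A.2, A.1)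

/-- The union of two overlapping or adjacent closed intervals, as an interval:
from the smaller left endpoint to the larger right endpoint.  In particular
`sdJoin A (conjSD A)` represents the interval `A ∪ Ā`. -/
def sdJoin (A B : ℚ × ℚ) : ℚ × ℚ := (min A.1 B.1, max A.2 B.2)

/-- A standard dyadic `n`-partition of `[0,1]`: breakpoints
`0 = a_0 < a_1 < ... < a_n = 1` with every `[a_i, a_{i+1}]` a standard dyadic
interval. -/
structure SDPartition (n : ℕ) where
  pts : Fin (n + 1) → ℚ
  first : pts 0 = 0
  last : pts (Fin.last n) = 1
  mono : StrictMono pts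
  sd : ∀ i : Fin n, IsSD (pts i.castSucc) (pts i.succ)

/-- `S(I)`: the set of intervals `[a_i, a_j]` (`i < j`) with endpoints breakpoints
of `I` that are standard dyadic intervals. -/
def SIn {n : ℕ} (I : SDPartition n) : Set (ℚ × ℚ) :=
  {A | (∃ i j : Fin (n + 1), i < j ∧ A = (I.pts i, I.pts j)) ∧ IsSD A.1 A.2}

/-- The midpoint of an interval. -/
def midQ (A : ℚ × ℚ) : ℚ := (A.1 + A.2) / 2

/-- The length of an interval. -/
def lenQ (A : ℚ × ℚ) : ℚ := A.2 - A.1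

/-- `E`: the set of dyadic rationals strictly between 0 and 1. -/
def Edyadic : Set ℚ := {q | ∃ m k : ℕ, 1 ≤ k ∧ k < 2 ^ m ∧ q = (k : ℚ) / 2 ^ m}

/-- `S_L(I) = S(I) ∩ S_L`. -/
def SLIn {n : ℕ} (I : SDPartition n) : Set (ℚ × ℚ) := {A ∈ SIn I | IsLeftSD A.1 A.2}

/-- `S_R(I) = S(I) ∩ S_R`. -/
def SRIn {n : ℕ} (I : SDPartition n) : Set (ℚ × ℚ) := {A ∈ SIn I | IsRightSD A.1 A.2}

/-- `M(I)`: the set of midpoints of the subintervals of `I`. -/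
def MIn {n : ℕ} (I : SDPartition n) : Set ℚ :=
  {q | ∃ i : Fin n, q = midQ (I.pts i.castSucc, I.pts i.succ)}

/-- `E(I)`: the union of `M(I)` with the breakpoints of `I` other than 0 and 1. -/
def EIn {n : ℕ} (I : SDPartition n) : Set ℚ :=
  MIn I ∪ {q | (∃ i : Fin (n + 1), I.pts i = q) ∧ q ≠ 0 ∧ q ≠ 1}

/-
The midpoint of an s.d. interval `B` of length `2^-m` is a dyadic rational of level `m + 1`, so no
strictly shorter s.d. interval contains it in its interior. If `B ∈ S(I)` is not a subinterval of
`I`, the subinterval of `I` containing the midpoint of `B` (at its left end or in its interior) lies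
in `B` and is strictly shorter, so the midpoint is a breakpoint of `I`. Then the left half `A` of `B`
belongs to `S(I)`, is a left s.d. interval, and its conjugate is the right half of `B`.
-/

lemma Fin.exists_castSucc_le_lt_succ {α : Type*} [LinearOrder α] {n : ℕ} (f : Fin (n + 1) → α)
    {c : α} (h0 : f 0 ≤ c) (hlast : c < f (Fin.last n)) :
    ∃ t : Fin n, f t.castSucc ≤ c ∧ c < f t.succ := by
  classical
  have hex : ∃ s, c < f s := ⟨_, hlast⟩
  obtain ⟨t, ht⟩ : ∃ t : Fin n, t.succ = Fin.find _ hex :=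
    Fin.exists_succ_eq.mpr fun h ↦ h0.not_gt (h ▸ Fin.find_spec hex)
  exact ⟨t, not_lt.mp (Fin.find_min hex (ht ▸ Fin.castSucc_lt_succ)), ht ▸ Fin.find_spec hex⟩

lemma div_two_pow_notMem_Ioo (p N : ℕ) {a b : ℕ} (hba : b ≤ a) :
    (N : ℚ) / 2 ^ b ∉ Set.Ioo ((p : ℚ) / 2 ^ a) (((p : ℚ) + 1) / 2 ^ a) := by
  rintro ⟨hlo, hhi⟩
  have hscale : (N : ℚ) / 2 ^ b = ((N * 2 ^ (a - b) : ℕ) : ℚ) / 2 ^ a := by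
    rw [div_eq_div_iff (by positivity) (by positivity)]
    push_cast
    rw [mul_assoc, ← pow_add, Nat.sub_add_cancel hba]
  rw [hscale] at hlo hhi
  have hlo' : p < N * 2 ^ (a - b) := by
    exact_mod_cast (div_lt_div_iff_of_pos_right (by positivity)).mp hlo
  have hhi' : N * 2 ^ (a - b) < p + 1 := by
    exact_mod_cast (div_lt_div_iff_of_pos_right (by positivity)).mp hhi
  omega

lemma IsSD.le_midpoint_or_midpoint_le {l r l' r' : ℚ} (hB : IsSD l r) (hD : IsSD l' r')
    (hlen : r' - l' < r - l) :
    r' ≤ (l + r) / 2 ∨ (l + r) / 2 ≤ l' := by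
  obtain ⟨m, k, -, rfl, rfl⟩ := hB
  obtain ⟨a, p, -, rfl, rfl⟩ := hD
  have hma : m < a := by
    have hlen' : (1 : ℚ) / 2 ^ a < 1 / 2 ^ m := by
      convert hlen using 1 <;> field_simp <;> ring
    rw [one_div_lt_one_div (by positivity) (by positivity)] at hlen'
    exact (pow_lt_pow_iff_right₀ one_lt_two).mp hlen'
  have hmid : ((k : ℚ) / 2 ^ m + ((k : ℚ) + 1) / 2 ^ m) / 2 =
      ((2 * k + 1 : ℕ) : ℚ) / 2 ^ (m + 1) := by
    push_cast
    field_simp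
    ring
  rw [hmid]
  by_contra! h
  exact div_two_pow_notMem_Ioo p (2 * k + 1) hma ⟨h.2, h.1⟩

lemma IsSD.isLeftSD_left_half {l r : ℚ} (h : IsSD l r) : IsLeftSD l ((l + r) / 2) := by
  obtain ⟨m, k, hk, rfl, rfl⟩ := h
  refine ⟨m + 1, 2 * k, le_add_self, by rw [pow_succ]; omega, even_two_mul k, ?_, ?_⟩ <;>
  · push_cast
    field_simp
    ring

lemma IsLeftSD.isSD {l r : ℚ} (h : IsLeftSD l r) : IsSD l r := by
  obtain ⟨m, k, -, hk, -, hl, hr⟩ := h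
  exact ⟨m, k, hk, hl, hr⟩

lemma IsLeftSD.conjSD_eq {l r : ℚ} (h : IsLeftSD l r) : conjSD (l, r) = (r, 2 * r - l) := by
  simp only [conjSD, if_pos h]

lemma IsSD.sdJoin_left_half_conjSD {l r : ℚ} (h : IsSD l r) :
    sdJoin (l, (l + r) / 2) (conjSD (l, (l + r) / 2)) = (l, r) := by
  have hlr : l < r := by
    obtain ⟨m, k, -, rfl, rfl⟩ := h
    gcongr
    linarith
  rw [h.isLeftSD_left_half.conjSD_eq, sdJoin]
  ext
  · exact min_eq_left (by linarith)
  · dsimp only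
    rw [max_eq_right (by linarith)]
    ring

namespace SDPartition

variable {n : ℕ} (I : SDPartition n)

lemma pts_le_one (i : Fin (n + 1)) : I.pts i ≤ 1 :=
  I.last ▸ I.mono.monotone (Fin.le_last i)

lemma exists_pts_eq_midpoint {i j : Fin (n + 1)} (hij : i < j) (hB : IsSD (I.pts i) (I.pts j))
    (hnotsub : ¬ ∃ t : Fin n, (I.pts i, I.pts j) = (I.pts t.castSucc, I.pts t.succ)) :
    ∃ t, I.pts t = (I.pts i + I.pts j) / 2 := by
  set c := (I.pts i + I.pts j) / 2 with hc
  have hlt : I.pts i < I.pts j := I.mono hij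
  have hic : I.pts i < c := by linarith
  have hcj : c < I.pts j := by linarith
  obtain ⟨t, htc, hct⟩ := Fin.exists_castSucc_le_lt_succ I.pts
    ((I.mono.monotone (Fin.zero_le i)).trans hic.le) (hcj.trans_le (I.mono.monotone j.le_last))
  have hit : I.pts i ≤ I.pts t.castSucc := by
    by_contra! h
    have := I.mono.monotone (Fin.castSucc_lt_iff_succ_le.mp (I.mono.lt_iff_lt.mp h))
    linarith
  have htj : I.pts t.succ ≤ I.pts j := by
    by_contra! h
    have := I.mono.monotone (Fin.le_castSucc_iff.mpr (I.mono.lt_iff_lt.mp h))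
    linarith
  have hlen : I.pts t.succ - I.pts t.castSucc < I.pts j - I.pts i := by
    refine lt_of_le_of_ne (by linarith) fun heq ↦ hnotsub ⟨t, ?_⟩
    rw [Prod.mk.injEq]
    constructor <;> linarith
  rcases hB.le_midpoint_or_midpoint_le (I.sd t) hlen with h | h
  · exact absurd hct h.not_gt
  · exact ⟨t.castSucc, le_antisymm htc h⟩

end SDPartition

/-- if `B ∈ S(I)` is not a subinterval of the partition `I`, then
`B = A ∪ Ā` for some `A ∈ S(I)` with `A ≠ [0,1]`. -/
theorem statement_1 {n : ℕ} (I : SDPartition n) (B : ℚ × ℚ)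
    (hB : B ∈ SIn I)
    (hnotsub : ¬ ∃ i : Fin n, B = (I.pts i.castSucc, I.pts i.succ)) :
    ∃ A ∈ SIn I, A ≠ ((0 : ℚ), (1 : ℚ)) ∧ B = sdJoin A (conjSD A) := by
  obtain ⟨⟨i, j, hij, rfl⟩, hsd⟩ := hB
  obtain ⟨t, ht⟩ := I.exists_pts_eq_midpoint hij hsd hnotsub
  have hlt : I.pts i < I.pts j := I.mono hij
  refine ⟨(I.pts i, (I.pts i + I.pts j) / 2), ⟨⟨i, t, ?_, by rw [ht]⟩,
    hsd.isLeftSD_left_half.isSD⟩, ?_, hsd.sdJoin_left_half_conjSD.symm⟩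
  · exact I.mono.lt_iff_lt.mp (by linarith)
  · intro h
    linarith [congrArg Prod.snd h, I.pts_le_one j]
end

section
/- Let I be a standard dyadic n-partition of [0,1]. Then the set S(I) has exactly 2n − 1 elements. -/
/-!
Induction on `n`, removing one breakpoint at a time. Let `[k/2^m, (k+1)/2^m]` be a shortest
interval of `I`; its endpoint `c` with odd numerator is shared with a neighbouring interval. An
s.d. interval with endpoint `c = odd/2^m` has length at most `2^-m`, so by minimality the
neighbour is the sibling of the same length, and the two merge into an s.d. interval. For the
same reason the only s.d. intervals of `I` with endpoint `c` are the two siblings, so deleting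
`c` gives an `(n-1)`-partition `I'` with `|S(I)| = |S(I')| + 2`.
-/

lemma IsSD.lt {l r : ℚ} (h : IsSD l r) : l < r := by
  obtain ⟨m, k, -, rfl, rfl⟩ := h
  gcongr
  exact lt_add_one _

lemma Odd.le_of_div_two_pow_eq {a k p m : ℕ} (hk : Odd k) (h : (a : ℚ) / 2 ^ p = k / 2 ^ m) :
    m ≤ p := by
  by_contra! hpm
  have h' : a * 2 ^ (m - p) * 2 ^ p = k * 2 ^ p := by
    rw [mul_assoc, ← pow_add, Nat.sub_add_cancel hpm.le]
    field_simp at h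
    exact_mod_cast h.trans (mul_comm _ _)
  have hka : k = a * 2 ^ (m - p) := (Nat.eq_of_mul_eq_mul_right (by positivity) h').symm
  exact Nat.not_even_iff_odd.mpr hk (hka ▸ (Nat.even_pow.mpr ⟨even_two, by omega⟩).mul_left a)

lemma IsSD.sub_le_of_right_eq {l r : ℚ} {m k : ℕ} (h : IsSD l r) (hk : Odd k)
    (hr : r = k / 2 ^ m) : r - l ≤ 1 / 2 ^ m := by
  obtain ⟨p, a, -, rfl, rfl⟩ := h
  have hmp : m ≤ p := hk.le_of_div_two_pow_eq (a := a + 1) (by push_cast; exact hr)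
  calc ((a : ℚ) + 1) / 2 ^ p - a / 2 ^ p = 1 / 2 ^ p := by ring
    _ ≤ 1 / 2 ^ m := by gcongr; norm_num

lemma IsSD.sub_le_of_left_eq {l r : ℚ} {m k : ℕ} (h : IsSD l r) (hk : Odd k)
    (hl : l = k / 2 ^ m) : r - l ≤ 1 / 2 ^ m := by
  obtain ⟨p, a, -, rfl, rfl⟩ := h
  have hmp : m ≤ p := hk.le_of_div_two_pow_eq hl
  calc ((a : ℚ) + 1) / 2 ^ p - a / 2 ^ p = 1 / 2 ^ p := by ring
    _ ≤ 1 / 2 ^ m := by gcongr; norm_num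

lemma isSD_sub_one_add_one_of_odd {m k : ℕ} (hk : Odd k) (hkm : k + 1 ≤ 2 ^ m) :
    IsSD ((k - 1) / 2 ^ m) ((k + 1) / 2 ^ m) := by
  obtain ⟨r, rfl⟩ := hk
  obtain ⟨m, rfl⟩ : ∃ m', m = m' + 1 := Nat.exists_eq_add_one.mpr (by
    by_contra! h; interval_cases m; simp at hkm)
  refine ⟨m, r, by rw [pow_succ] at hkm; omega, ?_, ?_⟩ <;> (push_cast; field_simp; ring)

namespace SDPartition

variable {n : ℕ}

lemma mem_SIn_iff (I : SDPartition n) {A : ℚ × ℚ} :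
    A ∈ SIn I ↔ A.1 ∈ Set.range I.pts ∧ A.2 ∈ Set.range I.pts ∧ IsSD A.1 A.2 := by
  constructor
  · rintro ⟨⟨i, j, -, rfl⟩, hsd⟩
    exact ⟨⟨i, rfl⟩, ⟨j, rfl⟩, hsd⟩
  · rintro ⟨⟨i, hi⟩, ⟨j, hj⟩, hsd⟩
    refine ⟨⟨i, j, I.mono.lt_iff_lt.mp ?_, by rw [hi, hj]⟩, hsd⟩
    rw [hi, hj]
    exact hsd.lt

lemma SIn_finite (I : SDPartition n) : (SIn I).Finite :=
  ((Set.finite_range I.pts).prod (Set.finite_range I.pts)).subset fun _ hA =>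
    ⟨(I.mem_SIn_iff.mp hA).1, (I.mem_SIn_iff.mp hA).2.1⟩

lemma mem_SIn_of_succ (I : SDPartition n) (i : Fin n) :
    (I.pts i.castSucc, I.pts i.succ) ∈ SIn I :=
  I.mem_SIn_iff.mpr ⟨⟨_, rfl⟩, ⟨_, rfl⟩, I.sd i⟩

lemma SIn_one (I : SDPartition 1) : SIn I = {(0, 1)} := by
  ext A
  constructor
  · rintro ⟨⟨i, j, hij, rfl⟩, -⟩
    obtain ⟨rfl, rfl⟩ : i = 0 ∧ j = Fin.last 1 := by
      constructor <;> ext <;> simp only [Fin.val_zero, Fin.val_last] <;> omega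
    rw [I.first, I.last, Set.mem_singleton_iff]
  · rintro rfl
    simpa [I.first, ← I.last] using I.mem_SIn_of_succ 0

lemma interval_ne_zero_one (I : SDPartition (n + 2)) (u : Fin (n + 2)) :
    (I.pts u.castSucc, I.pts u.succ) ≠ (0, 1) := by
  intro h
  have h0 := congrArg Fin.val (I.mono.injective ((Prod.ext_iff.mp h).1.trans I.first.symm))
  have h1 := congrArg Fin.val (I.mono.injective ((Prod.ext_iff.mp h).2.trans I.last.symm))
  simp only [Fin.val_castSucc, Fin.val_succ, Fin.val_zero, Fin.val_last] at h0 h1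
  omega

lemma eq_of_mem_SIn_of_snd_eq (I : SDPartition n) (i : Fin n) {m k : ℕ} (hk : Odd k)
    (hr : I.pts i.succ = k / 2 ^ m) (hlen : I.pts i.succ - I.pts i.castSucc = 1 / 2 ^ m)
    {A : ℚ × ℚ} (hA : A ∈ SIn I) (h2 : A.2 = I.pts i.succ) :
    A = (I.pts i.castSucc, I.pts i.succ) := by
  obtain ⟨⟨q, hq⟩, -, hsd⟩ := I.mem_SIn_iff.mp hA
  have hle : A.2 - A.1 ≤ 1 / 2 ^ m := hsd.sub_le_of_right_eq hk (h2.trans hr)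
  have hq_lt : q < i.succ := I.mono.lt_iff_lt.mp (by rw [hq, ← h2]; exact hsd.lt)
  have hq_le : I.pts q ≤ I.pts i.castSucc := I.mono.monotone (Fin.le_castSucc_iff.mpr hq_lt)
  ext
  · linarith
  · exact h2

lemma eq_of_mem_SIn_of_fst_eq (I : SDPartition n) (i : Fin n) {m k : ℕ} (hk : Odd k)
    (hl : I.pts i.castSucc = k / 2 ^ m) (hlen : I.pts i.succ - I.pts i.castSucc = 1 / 2 ^ m)
    {A : ℚ × ℚ} (hA : A ∈ SIn I) (h1 : A.1 = I.pts i.castSucc) :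
    A = (I.pts i.castSucc, I.pts i.succ) := by
  obtain ⟨-, ⟨q, hq⟩, hsd⟩ := I.mem_SIn_iff.mp hA
  have hle : A.2 - A.1 ≤ 1 / 2 ^ m := hsd.sub_le_of_left_eq hk (h1.trans hl)
  have hq_gt : i.castSucc < q := I.mono.lt_iff_lt.mp (by rw [hq, ← h1]; exact hsd.lt)
  have hq_ge : I.pts i.succ ≤ I.pts q :=
    I.mono.monotone (Fin.castSucc_lt_iff_succ_le.mp hq_gt)
  ext
  · exact h1
  · linarith

lemma exists_sibling_pair (I : SDPartition (n + 2)) :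
    ∃ (i : Fin (n + 1)) (m k : ℕ), Odd k ∧ k + 1 ≤ 2 ^ m ∧
      I.pts i.castSucc.castSucc = (k - 1) / 2 ^ m ∧ I.pts i.succ.castSucc = k / 2 ^ m ∧
      I.pts i.succ.succ = (k + 1) / 2 ^ m := by
  obtain ⟨u, -, hu⟩ := Finset.univ.exists_min_image
    (fun u : Fin (n + 2) => I.pts u.succ - I.pts u.castSucc) Finset.univ_nonempty
  obtain ⟨m, k, hkm, hl, hr⟩ := I.sd u
  have hlen : ∀ v : Fin (n + 2), 1 / 2 ^ m ≤ I.pts v.succ - I.pts v.castSucc := fun v => by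
    simpa only [hl, hr, add_div, add_sub_cancel_left] using hu v (Finset.mem_univ v)
  have hm : m ≠ 0 := by
    rintro rfl
    obtain rfl : k = 0 := by simpa using hkm
    exact I.interval_ne_zero_one u (by simp [hl, hr])
  rcases Nat.even_or_odd k with hk | hk
  · have hk2 : k + 2 ≤ 2 ^ m := by
      obtain ⟨r, rfl⟩ := hk
      obtain ⟨s, hs⟩ : Even (2 ^ m) := (Nat.even_pow' hm).mpr even_two
      omega
    obtain ⟨i, rfl⟩ : ∃ i : Fin (n + 1), i.castSucc = u := by
      refine Fin.exists_castSucc_eq.mpr fun hu_last => ?_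
      have h1 : ((k : ℚ) + 1) / 2 ^ m = 1 := by rw [← hr, hu_last, Fin.succ_last, I.last]
      rw [div_eq_one_iff_eq (by positivity)] at h1
      exact absurd (by exact_mod_cast h1) (by omega : k + 1 ≠ 2 ^ m)
    have hc : I.pts i.succ.castSucc = ((k + 1 : ℕ) : ℚ) / 2 ^ m := by
      rw [← Fin.succ_castSucc, hr]; push_cast; rfl
    have hlen_right : I.pts i.succ.succ - I.pts i.succ.castSucc = 1 / 2 ^ m :=
      ((I.sd i.succ).sub_le_of_left_eq hk.add_one hc).antisymm (hlen _)
    refine ⟨i, m, k + 1, hk.add_one, hk2, ?_, hc, ?_⟩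
    · rw [hl]; push_cast; ring
    · rw [hc] at hlen_right
      push_cast at hlen_right ⊢
      rw [add_div]
      linarith
  · obtain ⟨i, rfl⟩ : ∃ i : Fin (n + 1), i.succ = u := by
      refine Fin.exists_succ_eq.mpr fun hu_zero => ?_
      have h0 : (k : ℚ) / 2 ^ m = 0 := by rw [← hl, hu_zero, Fin.castSucc_zero, I.first]
      simp [hk.pos.ne'] at h0
    have hc : I.pts i.castSucc.succ = k / 2 ^ m := by rw [Fin.succ_castSucc, hl]
    have hlen_left : I.pts i.castSucc.succ - I.pts i.castSucc.castSucc = 1 / 2 ^ m :=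
      ((I.sd i.castSucc).sub_le_of_right_eq hk hc).antisymm (hlen _)
    refine ⟨i, m, k, hk, hkm, ?_, hl, hr⟩
    rw [hc] at hlen_left
    rw [sub_div]
    linarith

/-- Deletes the breakpoint `a_{i+1}`, merging `[a_i, a_{i+1}]` and `[a_{i+1}, a_{i+2}]`. -/
def merge (I : SDPartition (n + 2)) (i : Fin (n + 1))
    (hsd : IsSD (I.pts i.castSucc.castSucc) (I.pts i.succ.succ)) : SDPartition (n + 1) where
  pts := I.pts ∘ i.succ.castSucc.succAbove
  first := by
    rw [Function.comp_apply,
      Fin.succAbove_ne_zero_zero (Fin.castSucc_ne_zero_iff.mpr i.succ_ne_zero), I.first]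
  last := by
    rw [Function.comp_apply, Fin.succAbove_ne_last_last (Fin.castSucc_lt_last _).ne, I.last]
  mono := I.mono.comp (Fin.strictMono_succAbove _)
  sd q := by
    simp only [Function.comp_apply]
    rcases lt_trichotomy q i with h | rfl | h
    · rw [Fin.succAbove_castSucc_of_lt _ _ (Fin.castSucc_lt_succ_iff.mpr h.le),
        Fin.succAbove_castSucc_of_lt _ _ (Fin.succ_lt_succ_iff.mpr h), ← Fin.succ_castSucc]
      exact I.sd q.castSucc
    · rw [Fin.succAbove_castSucc_of_lt _ _ Fin.castSucc_lt_succ,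
        Fin.succAbove_castSucc_of_le _ _ le_rfl]
      exact hsd
    · rw [Fin.succAbove_castSucc_of_le _ _ (Fin.succ_le_castSucc_iff.mpr h),
        Fin.succAbove_castSucc_of_le _ _ (Fin.succ_le_succ_iff.mpr h.le), Fin.succ_castSucc]
      exact I.sd q.succ

lemma range_merge (I : SDPartition (n + 2)) (i : Fin (n + 1))
    (hsd : IsSD (I.pts i.castSucc.castSucc) (I.pts i.succ.succ)) :
    Set.range (I.merge i hsd).pts = Set.range I.pts \ {I.pts i.succ.castSucc} := by
  rw [merge, Set.range_comp, Fin.range_succAbove, Set.compl_eq_univ_sdiff,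
    Set.image_sdiff I.mono.injective, Set.image_univ, Set.image_singleton]

lemma mem_SIn_merge_iff (I : SDPartition (n + 2)) (i : Fin (n + 1))
    (hsd : IsSD (I.pts i.castSucc.castSucc) (I.pts i.succ.succ)) {A : ℚ × ℚ} :
    A ∈ SIn (I.merge i hsd) ↔
      A ∈ SIn I ∧ A.1 ≠ I.pts i.succ.castSucc ∧ A.2 ≠ I.pts i.succ.castSucc := by
  simp only [mem_SIn_iff, range_merge, Set.mem_sdiff, Set.mem_singleton_iff]
  tauto

lemma ncard_SIn_eq_ncard_SIn_merge_add_two (I : SDPartition (n + 2)) (i : Fin (n + 1))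
    {m k : ℕ} (hk : Odd k) (hl : I.pts i.castSucc.castSucc = (k - 1) / 2 ^ m)
    (hc : I.pts i.succ.castSucc = k / 2 ^ m) (hr : I.pts i.succ.succ = (k + 1) / 2 ^ m)
    (hsd : IsSD (I.pts i.castSucc.castSucc) (I.pts i.succ.succ)) :
    (SIn I).ncard = (SIn (I.merge i hsd)).ncard + 2 := by
  have hc' : I.pts i.castSucc.succ = k / 2 ^ m := by rw [Fin.succ_castSucc, hc]
  have hlen_left : I.pts i.castSucc.succ - I.pts i.castSucc.castSucc = 1 / 2 ^ m := by
    rw [hc', hl]; ring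
  have hlen_right : I.pts i.succ.succ - I.pts i.succ.castSucc = 1 / 2 ^ m := by
    rw [hc, hr]; ring
  have hsplit : SIn I = insert (I.pts i.castSucc.castSucc, I.pts i.succ.castSucc)
      (insert (I.pts i.succ.castSucc, I.pts i.succ.succ) (SIn (I.merge i hsd))) := by
    ext A
    simp only [Set.mem_insert_iff, mem_SIn_merge_iff]
    constructor
    · intro hA
      by_cases h2 : A.2 = I.pts i.succ.castSucc
      · rw [← Fin.succ_castSucc] at h2 ⊢
        exact .inl (I.eq_of_mem_SIn_of_snd_eq i.castSucc hk hc' hlen_left hA h2)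
      by_cases h1 : A.1 = I.pts i.succ.castSucc
      · exact .inr (.inl (I.eq_of_mem_SIn_of_fst_eq i.succ hk hc hlen_right hA h1))
      exact .inr (.inr ⟨hA, h1, h2⟩)
    · rintro (rfl | rfl | ⟨hA, -⟩)
      · rw [← Fin.succ_castSucc]
        exact I.mem_SIn_of_succ _
      · exact I.mem_SIn_of_succ _
      · exact hA
  have hright : (I.pts i.succ.castSucc, I.pts i.succ.succ) ∉ SIn (I.merge i hsd) :=
    fun h => ((I.mem_SIn_merge_iff i hsd).mp h).2.1 rfl
  have hleft : (I.pts i.castSucc.castSucc, I.pts i.succ.castSucc) ∉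
      insert (I.pts i.succ.castSucc, I.pts i.succ.succ) (SIn (I.merge i hsd)) := by
    rintro (h | h)
    · exact (I.mono (Fin.castSucc_lt_castSucc_iff.mpr Fin.castSucc_lt_succ)).ne
        (Prod.ext_iff.mp h).1
    · exact ((I.mem_SIn_merge_iff i hsd).mp h).2.2 rfl
  have hfin := (I.merge i hsd).SIn_finite
  rw [hsplit, Set.ncard_insert_of_notMem hleft (hfin.insert _),
    Set.ncard_insert_of_notMem hright hfin]

end SDPartition

/-- for a standard dyadic `n`-partition `I`, the set `S(I)` has
exactly `2n - 1` elements. -/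
theorem statement_2 {n : ℕ} (I : SDPartition n) :
    (SIn I).ncard = 2 * n - 1 := by
  induction n with
  | zero => exact absurd (I.first.symm.trans I.last) zero_ne_one
  | succ n ih =>
    cases n with
    | zero => rw [I.SIn_one, Set.ncard_singleton]
    | succ n =>
      obtain ⟨i, m, k, hk, hkm, hl, hc, hr⟩ := I.exists_sibling_pair
      have hsd : IsSD (I.pts i.castSucc.castSucc) (I.pts i.succ.succ) := by
        rw [hl, hr]
        exact isSD_sub_one_add_one_of_odd hk hkm
      rw [I.ncard_SIn_eq_ncard_SIn_merge_add_two i hk hl hc hr hsd, ih]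
      omega
end

section
/- Let (I, J) be a pair of standard dyadic n-partitions and let g = γ^I_J. Then g preserves signs on E if and only if for every i ∈ {1,...,2n−1}, the i-th smallest element of E(I) and the i-th smallest element of E(J) have the same sign. (This is the content of the identification of the oriented Thompson group with the sign-preserving elements of F.) -/
/-- `SignSpec s` says that `s` takes values in `{+1, -1}` on standard dyadic
intervals, `s([0,1]) = +1`, and for `A ≠ [0,1]`, `s A = s (A ∪ Ā)` if `A` is a
left interval while `s A = - s (A ∪ Ā)` if `A` is a right interval. -/
def SignSpec (s : ℚ × ℚ → ℤ) : Prop :=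
  (∀ A ∈ SDSet, s A = 1 ∨ s A = -1) ∧
  s ((0 : ℚ), (1 : ℚ)) = 1 ∧
  ∀ A ∈ SDSet, A ≠ ((0 : ℚ), (1 : ℚ)) →
    (IsLeftSD A.1 A.2 → s A = s (sdJoin A (conjSD A))) ∧
    (IsRightSD A.1 A.2 → s A = - s (sdJoin A (conjSD A)))

/-- `IsGamma I J γ` says that `γ = γ^I_J`: the piecewise linear map sending the
`i`-th breakpoint of `I` to the `i`-th breakpoint of `J` and linear on each
subinterval of `I`. -/
def IsGamma {n : ℕ} (I J : SDPartition n) (γ : ℚ → ℚ) : Prop :=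
  ∀ i : Fin n, ∀ x : ℚ, I.pts i.castSucc ≤ x → x ≤ I.pts i.succ →
    γ x = J.pts i.castSucc +
      (J.pts i.succ - J.pts i.castSucc) / (I.pts i.succ - I.pts i.castSucc) *
        (x - I.pts i.castSucc)

/-- `γ` preserves signs on `E`: `γ(E) = E` and every `e ∈ E` has the same sign
as `γ e`, where the sign of a point of `E` is the sign of the unique standard
dyadic interval having it as midpoint. -/
def PreservesSigns (s : ℚ × ℚ → ℤ) (γ : ℚ → ℚ) : Prop :=
  γ '' Edyadic = Edyadic ∧
  ∀ A B : ℚ × ℚ, A ∈ SDSet → B ∈ SDSet → γ (midQ A) = midQ B → s B = s A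

/-!
Signs are multiplicative under refinement: the sub-interval
`[(p 2^d + j)/2^(u+d), (p 2^d + j + 1)/2^(u+d)]` of `P = [p/2^u, (p+1)/2^u]` has sign
`s(P) · s([j/2^d, (j+1)/2^d])`, because the recursion defining `s` from level `u + d` down to level
`u` only reads the last `d` binary digits of the index, i.e. those of `j`.
On its `i`-th piece `γ` is the affine map from the `i`-th piece of `I` onto that of `J`, so it sends
each such refinement of a piece of `I` to the same refinement of the corresponding piece of `J`.
Every point of `E` is either in `E(I)` or the midpoint of such a refinement; hence `γ(E) = E`, and
`γ` preserves signs as soon as it does on `E(I)`. Finally `γ` is increasing and maps `E(I)` onto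
`E(J)`, so it sends the `i`-th smallest point of `E(I)` to the `i`-th smallest point of `E(J)`.
-/

def sdInterval (m k : ℕ) : ℚ × ℚ := ((k : ℚ) / 2 ^ m, ((k : ℚ) + 1) / 2 ^ m)

theorem sdInterval_mem_SDSet {m k : ℕ} (hk : k < 2 ^ m) : sdInterval m k ∈ SDSet :=
  ⟨m, k, hk, rfl, rfl⟩

theorem exists_eq_sdInterval {A : ℚ × ℚ} (hA : A ∈ SDSet) :
    ∃ m k : ℕ, k < 2 ^ m ∧ A = sdInterval m k := by
  obtain ⟨m, k, hk, h₁, h₂⟩ := hA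
  exact ⟨m, k, hk, Prod.ext h₁ h₂⟩

theorem sdInterval_inj {m k m' k' : ℕ} :
    sdInterval m k = sdInterval m' k' ↔ m = m' ∧ k = k' := by
  refine ⟨fun h => ?_, fun ⟨hm, hk⟩ => hm ▸ hk ▸ rfl⟩
  have hlen : (1 : ℚ) / 2 ^ m = 1 / 2 ^ m' := by
    have h₁ := congrArg (fun A : ℚ × ℚ => A.2 - A.1) h
    simp only [sdInterval] at h₁
    rwa [← sub_div, ← sub_div, add_sub_cancel_left, add_sub_cancel_left] at h₁
  have hm : m = m' := by
    rw [one_div, one_div, inv_inj] at hlen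
    exact Nat.pow_right_injective le_rfl (by exact_mod_cast hlen)
  subst hm
  have h₁ := congrArg Prod.fst h
  simp only [sdInterval] at h₁
  exact ⟨rfl, by exact_mod_cast (div_left_inj' (by positivity)).mp h₁⟩

theorem midQ_sdInterval (m k : ℕ) : midQ (sdInterval m k) = (2 * k + 1 : ℚ) / 2 ^ (m + 1) := by
  simp only [midQ, sdInterval]
  field_simp
  ring

theorem odd_mul_two_pow_inj {k k' m m' : ℕ}
    (h : (2 * k + 1) * 2 ^ m = (2 * k' + 1) * 2 ^ m') : m = m' ∧ k = k' := by
  wlog hle : m ≤ m' generalizing k k' m m'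
  · exact (this h.symm (by omega)).imp Eq.symm Eq.symm
  obtain ⟨e, rfl⟩ := Nat.exists_eq_add_of_le hle
  replace h : 2 * k + 1 = (2 * k' + 1) * 2 ^ e :=
    Nat.eq_of_mul_eq_mul_right (by positivity : 0 < 2 ^ m) (by rw [h, pow_add]; ring)
  rcases e with _ | e
  · simp only [pow_zero, mul_one] at h; omega
  · have : 2 * k + 1 = 2 * ((2 * k' + 1) * 2 ^ e) := by rw [h]; ring
    omega

theorem midQ_injOn_SDSet : Set.InjOn midQ SDSet := by
  intro A hA B hB h
  obtain ⟨m, k, -, rfl⟩ := exists_eq_sdInterval hA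
  obtain ⟨m', k', -, rfl⟩ := exists_eq_sdInterval hB
  rw [midQ_sdInterval, midQ_sdInterval, div_eq_div_iff (by positivity) (by positivity)] at h
  obtain ⟨hm, hk⟩ := odd_mul_two_pow_inj (m := m' + 1) (m' := m + 1) (by exact_mod_cast h)
  rw [sdInterval_inj]
  omega

theorem Edyadic_eq_image_midQ : Edyadic = midQ '' SDSet := by
  ext q
  constructor
  · rintro ⟨m, k, hk₁, hk₂, rfl⟩
    obtain ⟨t, c, hc, rfl⟩ := Nat.exists_eq_two_pow_mul_odd (n := k) (by omega)
    obtain ⟨c, rfl⟩ := hc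
    have htm : t < m := (Nat.pow_lt_pow_iff_right (by norm_num : 1 < 2)).mp
      ((Nat.le_mul_of_pos_right _ (by omega)).trans_lt hk₂)
    obtain ⟨r, rfl⟩ := Nat.exists_eq_add_of_lt htm
    have hcr : c < 2 ^ r := by
      rw [show t + r + 1 = t + (r + 1) by ring, pow_add, pow_succ] at hk₂
      have := Nat.lt_of_mul_lt_mul_left hk₂
      omega
    refine ⟨sdInterval r c, sdInterval_mem_SDSet hcr, ?_⟩
    rw [midQ_sdInterval]
    push_cast
    field_simp
    ring
  · rintro ⟨A, hA, rfl⟩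
    obtain ⟨m, k, hk, rfl⟩ := exists_eq_sdInterval hA
    refine ⟨m + 1, 2 * k + 1, by omega, by rw [pow_succ]; omega, ?_⟩
    rw [midQ_sdInterval]
    push_cast
    rfl

theorem midQ_mem_Edyadic {A : ℚ × ℚ} (hA : A ∈ SDSet) : midQ A ∈ Edyadic :=
  Edyadic_eq_image_midQ ▸ Set.mem_image_of_mem midQ hA

theorem Edyadic_subset_Ioo : Edyadic ⊆ Set.Ioo 0 1 := by
  rintro _ ⟨m, k, hk₁, hk₂, rfl⟩
  have hpos : (0 : ℚ) < 2 ^ m := by positivity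
  exact ⟨div_pos (by exact_mod_cast hk₁) hpos, (div_lt_one hpos).mpr (by exact_mod_cast hk₂)⟩

theorem isLeftSD_sdInterval_iff {m k : ℕ} :
    IsLeftSD (sdInterval m k).1 (sdInterval m k).2 ↔ 1 ≤ m ∧ k < 2 ^ m ∧ Even k := by
  constructor
  · rintro ⟨m', k', hm', hk', hev, h₁, h₂⟩
    obtain ⟨rfl, rfl⟩ := sdInterval_inj.mp (Prod.ext h₁ h₂)
    exact ⟨hm', hk', hev⟩
  · rintro ⟨hm, hk, hev⟩
    exact ⟨m, k, hm, hk, hev, rfl, rfl⟩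

theorem isRightSD_sdInterval {m k : ℕ} (hk : k < 2 ^ m) (hodd : Odd k) :
    IsRightSD (sdInterval m k).1 (sdInterval m k).2 := by
  refine Or.inr ⟨m, k, Nat.one_le_iff_ne_zero.mpr ?_, hk, hodd, rfl, rfl⟩
  rintro rfl
  obtain ⟨c, rfl⟩ := hodd
  omega

theorem sdInterval_ne_unit (m k : ℕ) :
    sdInterval (m + 1) k ≠ ((0 : ℚ), (1 : ℚ)) := by
  intro h
  have h₀ : sdInterval (m + 1) k = sdInterval 0 0 := by rw [h]; simp [sdInterval]
  exact absurd (sdInterval_inj.mp h₀).1 (Nat.succ_ne_zero m)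

theorem sdJoin_conjSD_sdInterval {m k : ℕ} (hk : k < 2 ^ (m + 1)) :
    sdJoin (sdInterval (m + 1) k) (conjSD (sdInterval (m + 1) k)) = sdInterval m (k / 2) := by
  have hpos : (0 : ℚ) < 2 ^ m := by positivity
  obtain ⟨c, rfl | rfl⟩ := Nat.even_or_odd' k
  · have hL := isLeftSD_sdInterval_iff.mpr ⟨by omega, hk, even_two_mul c⟩
    rw [conjSD, if_pos hL, Nat.mul_div_cancel_left c two_pos]
    simp only [sdJoin, sdInterval, pow_succ]
    push_cast
    rw [min_eq_left (by gcongr; linarith), max_eq_right (by rw [← sub_nonneg]; ring_nf; positivity)]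
    ext <;> field_simp
    ring
  · have hR : ¬IsLeftSD (sdInterval (m + 1) (2 * c + 1)).1 (sdInterval (m + 1) (2 * c + 1)).2 :=
      fun h => Nat.not_even_two_mul_add_one c (isLeftSD_sdInterval_iff.mp h).2.2
    rw [conjSD, if_neg hR, show (2 * c + 1) / 2 = c by omega]
    simp only [sdJoin, sdInterval, pow_succ]
    push_cast
    rw [min_eq_right (by rw [← sub_nonneg]; ring_nf; positivity), max_eq_left (by gcongr; linarith)]
    ext <;> field_simp <;> ring

theorem mul_two_pow_add_lt {u p d j : ℕ} (hp : p < 2 ^ u) (hj : j < 2 ^ d) :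
    p * 2 ^ d + j < 2 ^ (u + d) :=
  calc p * 2 ^ d + j < (p + 1) * 2 ^ d := by linarith
    _ ≤ 2 ^ u * 2 ^ d := Nat.mul_le_mul_right _ hp
    _ = 2 ^ (u + d) := (pow_add 2 u d).symm

namespace SignSpec

variable {s : ℚ × ℚ → ℤ} (hs : SignSpec s)
include hs

theorem apply_sdInterval_succ {m k : ℕ} (hk : k < 2 ^ (m + 1)) :
    s (sdInterval (m + 1) k) = (-1) ^ (k % 2) * s (sdInterval m (k / 2)) := by
  obtain ⟨hL, hR⟩ := hs.2.2 _ (sdInterval_mem_SDSet hk) (sdInterval_ne_unit m k)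
  rw [← sdJoin_conjSD_sdInterval hk]
  rcases Nat.even_or_odd k with hk₂ | hk₂
  · rw [Nat.even_iff.mp hk₂, pow_zero, one_mul]
    exact hL (isLeftSD_sdInterval_iff.mpr ⟨by omega, hk, hk₂⟩)
  · rw [Nat.odd_iff.mp hk₂, pow_one, neg_one_mul]
    exact hR (isRightSD_sdInterval hk hk₂)

theorem apply_sdInterval_refine {u p : ℕ} (hp : p < 2 ^ u) :
    ∀ {d j : ℕ}, j < 2 ^ d →
      s (sdInterval (u + d) (p * 2 ^ d + j)) = s (sdInterval u p) * s (sdInterval d j) := by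
  intro d
  induction d with
  | zero =>
    intro j hj
    obtain rfl : j = 0 := by simpa using hj
    have h₀ : sdInterval 0 0 = ((0 : ℚ), (1 : ℚ)) := by simp [sdInterval]
    simp [h₀, hs.2.1]
  | succ d ih =>
    intro j hj
    have hlt : p * 2 ^ (d + 1) + j < 2 ^ (u + d + 1) := mul_two_pow_add_lt hp hj
    have hdouble : p * 2 ^ (d + 1) = 2 * (p * 2 ^ d) := by ring
    have hmod : (p * 2 ^ (d + 1) + j) % 2 = j % 2 := by omega
    have hdiv : (p * 2 ^ (d + 1) + j) / 2 = p * 2 ^ d + j / 2 := by omega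
    rw [← add_assoc, hs.apply_sdInterval_succ hlt, hs.apply_sdInterval_succ hj, hmod, hdiv,
      ih (by rw [pow_succ] at hj; omega)]
    ring

end SignSpec

theorem exists_eq_sdInterval_refine {m k u p : ℕ}
    (h₁ : (sdInterval u p).1 < midQ (sdInterval m k))
    (h₂ : midQ (sdInterval m k) < (sdInterval u p).2) :
    ∃ d j : ℕ, j < 2 ^ d ∧ sdInterval m k = sdInterval (u + d) (p * 2 ^ d + j) := by
  rw [midQ_sdInterval] at h₁ h₂
  simp only [sdInterval] at h₁ h₂
  rw [div_lt_div_iff₀ (by positivity) (by positivity)] at h₁ h₂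
  have hlo : p * 2 ^ (m + 1) < (2 * k + 1) * 2 ^ u := by exact_mod_cast h₁
  have hhi : (2 * k + 1) * 2 ^ u < (p + 1) * 2 ^ (m + 1) := by exact_mod_cast h₂
  rcases le_or_gt u m with hum | hmu
  · obtain ⟨d, rfl⟩ := Nat.exists_eq_add_of_le hum
    have hlo' : 2 * (p * 2 ^ d) < 2 * k + 1 := by
      refine Nat.lt_of_mul_lt_mul_right (a := 2 ^ u) ?_
      calc 2 * (p * 2 ^ d) * 2 ^ u = p * 2 ^ (u + d + 1) := by ring
        _ < _ := hlo
    have hhi' : 2 * k + 1 < 2 * (p * 2 ^ d) + 2 * 2 ^ d := by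
      refine Nat.lt_of_mul_lt_mul_right (a := 2 ^ u) ?_
      calc (2 * k + 1) * 2 ^ u < _ := hhi
        _ = (2 * (p * 2 ^ d) + 2 * 2 ^ d) * 2 ^ u := by ring
    exact ⟨d, k - p * 2 ^ d, by omega, by rw [sdInterval_inj]; omega⟩
  · -- `(2k+1) 2^e` would lie strictly between `p` and `p + 1`
    obtain ⟨e, rfl⟩ := Nat.exists_eq_add_of_lt hmu
    have hlo' : p < (2 * k + 1) * 2 ^ e := by
      refine Nat.lt_of_mul_lt_mul_right (a := 2 ^ (m + 1)) ?_
      calc p * 2 ^ (m + 1) < _ := hlo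
        _ = (2 * k + 1) * 2 ^ e * 2 ^ (m + 1) := by ring
    have hhi' : (2 * k + 1) * 2 ^ e < p + 1 := by
      refine Nat.lt_of_mul_lt_mul_right (a := 2 ^ (m + 1)) ?_
      calc (2 * k + 1) * 2 ^ e * 2 ^ (m + 1) = (2 * k + 1) * 2 ^ (m + e + 1) := by ring
        _ < _ := hhi
    omega

namespace SDPartition

theorem ne_zero {n : ℕ} (I : SDPartition n) : n ≠ 0 := by
  rintro rfl
  have h := I.last
  rw [show Fin.last 0 = 0 from rfl, I.first] at h
  exact zero_ne_one h

variable {n : ℕ} (I : SDPartition n)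

theorem pts_eq_zero_iff {t : Fin (n + 1)} : I.pts t = 0 ↔ t = 0 := by
  rw [← I.first, I.mono.injective.eq_iff]

theorem pts_eq_one_iff {t : Fin (n + 1)} : I.pts t = 1 ↔ t = Fin.last n := by
  rw [← I.last, I.mono.injective.eq_iff]

theorem exists_mem_Ico {x : ℚ} (h₀ : 0 ≤ x) (h₁ : x < 1) :
    ∃ i : Fin n, I.pts i.castSucc ≤ x ∧ x < I.pts i.succ := by
  suffices ∀ t : Fin (n + 1), x < I.pts t → ∃ i : Fin n, I.pts i.castSucc ≤ x ∧ x < I.pts i.succ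
    from this (Fin.last n) (I.last ▸ h₁)
  refine Fin.induction (fun h => absurd (I.first ▸ h) (not_lt.mpr h₀)) fun i ih h => ?_
  by_cases hi : x < I.pts i.castSucc
  · exact ih hi
  · exact ⟨i, not_lt.mp hi, h⟩

theorem exists_piece_eq_sdInterval (i : Fin n) :
    ∃ u p : ℕ, p < 2 ^ u ∧ (I.pts i.castSucc, I.pts i.succ) = sdInterval u p :=
  exists_eq_sdInterval (I.sd i)

theorem EIn_subset_Edyadic : EIn I ⊆ Edyadic := by
  rintro _ (⟨i, rfl⟩ | ⟨⟨t, rfl⟩, h₀, h₁⟩)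
  · exact midQ_mem_Edyadic (I.sd i)
  · obtain ⟨i, rfl⟩ | rfl := Fin.eq_castSucc_or_eq_last t
    · obtain ⟨u, p, hp, hpts, -⟩ := I.sd i
      rw [hpts] at h₀ ⊢
      exact ⟨u, p, Nat.one_le_iff_ne_zero.mpr (by rintro rfl; simp at h₀), hp, rfl⟩
    · exact absurd I.last h₁

theorem midQ_mem_EIn_or_refine {A : ℚ × ℚ} (hA : A ∈ SDSet) :
    midQ A ∈ EIn I ∨ ∃ (i : Fin n) (u p d j : ℕ), p < 2 ^ u ∧ j < 2 ^ d ∧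
      (I.pts i.castSucc, I.pts i.succ) = sdInterval u p ∧
      A = sdInterval (u + d) (p * 2 ^ d + j) := by
  obtain ⟨hA₀, hA₁⟩ := Edyadic_subset_Ioo (midQ_mem_Edyadic hA)
  obtain ⟨i, hle, hlt⟩ := I.exists_mem_Ico hA₀.le hA₁
  rcases hle.eq_or_lt with heq | hlt'
  · exact Or.inl (Or.inr ⟨⟨_, heq⟩, hA₀.ne', hA₁.ne⟩)
  · obtain ⟨u, p, hp, hI⟩ := I.exists_piece_eq_sdInterval i
    obtain ⟨m, k, -, rfl⟩ := exists_eq_sdInterval hA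
    have h₁ : (sdInterval u p).1 < midQ (sdInterval m k) := by rw [← hI]; exact hlt'
    have h₂ : midQ (sdInterval m k) < (sdInterval u p).2 := by rw [← hI]; exact hlt
    obtain ⟨d, j, hj, hmk⟩ := exists_eq_sdInterval_refine h₁ h₂
    exact Or.inr ⟨i, u, p, d, j, hp, hj, hI, hmk⟩

end SDPartition

namespace IsGamma

variable {n : ℕ} {I J : SDPartition n} {γ : ℚ → ℚ} (hγ : IsGamma I J γ)
include hγ

theorem apply_pts (t : Fin (n + 1)) : γ (I.pts t) = J.pts t := by
  obtain ⟨i, rfl⟩ | rfl := Fin.eq_castSucc_or_eq_last t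
  · simpa using hγ i _ le_rfl (I.mono i.castSucc_lt_succ).le
  · obtain ⟨i, hi⟩ : ∃ i : Fin n, i.succ = Fin.last n :=
      ⟨⟨n - 1, by have := I.ne_zero; omega⟩, Fin.ext (by have := I.ne_zero; simp; omega)⟩
    have hI := (sub_pos.mpr (I.mono i.castSucc_lt_succ)).ne'
    rw [← hi, hγ i _ (I.mono i.castSucc_lt_succ).le le_rfl, div_mul_cancel₀ _ hI]
    ring

theorem apply_midQ (i : Fin n) :
    γ (midQ (I.pts i.castSucc, I.pts i.succ)) = midQ (J.pts i.castSucc, J.pts i.succ) := by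
  have hlt := I.mono i.castSucc_lt_succ
  rw [hγ i _ (by simp only [midQ]; linarith) (by simp only [midQ]; linarith)]
  simp only [midQ]
  field_simp [(sub_pos.mpr hlt).ne']
  ring

theorem apply_midQ_sdInterval_refine {i : Fin n} {u p v q d j : ℕ}
    (hI : (I.pts i.castSucc, I.pts i.succ) = sdInterval u p)
    (hJ : (J.pts i.castSucc, J.pts i.succ) = sdInterval v q) (hj : j < 2 ^ d) :
    γ (midQ (sdInterval (u + d) (p * 2 ^ d + j))) = midQ (sdInterval (v + d) (q * 2 ^ d + j)) := by
  simp only [sdInterval, Prod.ext_iff] at hI hJ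
  have hj' : (j : ℚ) + 1 ≤ 2 ^ d := by exact_mod_cast hj
  have hmid : ∀ w r : ℕ, midQ (sdInterval (w + d) (r * 2 ^ d + j)) =
      (r + (2 * j + 1) / 2 ^ (d + 1) : ℚ) / 2 ^ w := by
    intro w r
    rw [midQ_sdInterval]
    push_cast
    field_simp
    ring
  have hfrac : (0 : ℚ) ≤ (2 * j + 1) / 2 ^ (d + 1) ∧ (2 * j + 1) / 2 ^ (d + 1) ≤ (1 : ℚ) := by
    constructor
    · positivity
    · rw [div_le_one (by positivity), pow_succ]; linarith
  rw [hmid, hmid, hγ i _ (by rw [hI.1]; gcongr; linarith [hfrac.1])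
    (by rw [hI.2]; gcongr; linarith [hfrac.2]), hI.1, hI.2, hJ.1, hJ.2]
  field_simp
  ring

theorem strictMonoOn_Icc : StrictMonoOn γ (Set.Icc 0 1) := by
  suffices h : ∀ t : Fin (n + 1), StrictMonoOn γ (Set.Icc 0 (I.pts t)) from I.last ▸ h (Fin.last n)
  refine Fin.induction (by simp [I.first]) fun i ih => ?_
  have hlt := I.mono i.castSucc_lt_succ
  have hpiece : StrictMonoOn γ (Set.Icc (I.pts i.castSucc) (I.pts i.succ)) := by
    intro x hx y hy hxy
    rw [hγ i x hx.1 hx.2, hγ i y hy.1 hy.2]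
    have hslope : 0 < (J.pts i.succ - J.pts i.castSucc) / (I.pts i.succ - I.pts i.castSucc) :=
      div_pos (sub_pos.mpr (J.mono i.castSucc_lt_succ)) (sub_pos.mpr hlt)
    gcongr
  have h₀ := I.first ▸ I.mono.monotone (Fin.zero_le i.castSucc)
  rw [← Set.Icc_union_Icc_eq_Icc h₀ hlt.le]
  exact ih.union hpiece (isGreatest_Icc h₀) (isLeast_Icc hlt.le)

theorem image_EIn : γ '' EIn I = EIn J := by
  have hzero : ∀ t, I.pts t = 0 ↔ J.pts t = 0 := fun t => by
    rw [I.pts_eq_zero_iff, J.pts_eq_zero_iff]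
  have hone : ∀ t, I.pts t = 1 ↔ J.pts t = 1 := fun t => by
    rw [I.pts_eq_one_iff, J.pts_eq_one_iff]
  simp only [EIn, Set.image_union]
  congr 1
  · ext y
    constructor
    · rintro ⟨_, ⟨i, rfl⟩, rfl⟩
      exact ⟨i, hγ.apply_midQ i⟩
    · rintro ⟨i, rfl⟩
      exact ⟨_, ⟨i, rfl⟩, hγ.apply_midQ i⟩
  · ext y
    constructor
    · rintro ⟨_, ⟨⟨t, rfl⟩, h₀, h₁⟩, rfl⟩
      rw [hγ.apply_pts t]
      exact ⟨⟨t, rfl⟩, mt (hzero t).mpr h₀, mt (hone t).mpr h₁⟩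
    · rintro ⟨⟨t, rfl⟩, h₀, h₁⟩
      exact ⟨I.pts t, ⟨⟨t, rfl⟩, mt (hzero t).mp h₀, mt (hone t).mp h₁⟩, hγ.apply_pts t⟩

theorem comp_eq_of_range {k : ℕ} {e e' : Fin k → ℚ} (he : StrictMono e) (he' : StrictMono e')
    (hr : Set.range e = EIn I) (hr' : Set.range e' = EIn J) : γ ∘ e = e' := by
  have hmem : ∀ i, e i ∈ Set.Icc (0 : ℚ) 1 := fun i =>
    Set.Ioo_subset_Icc_self (Edyadic_subset_Ioo (I.EIn_subset_Edyadic (hr ▸ ⟨i, rfl⟩)))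
  have hmono : StrictMono (γ ∘ e) := fun a b hab =>
    hγ.strictMonoOn_Icc (hmem a) (hmem b) (he hab)
  rw [← hmono.range_inj he', Set.range_comp, hr, hγ.image_EIn, hr']

theorem image_Edyadic : γ '' Edyadic = Edyadic := by
  refine Set.Subset.antisymm ?_ fun y hy => ?_
  · rintro _ ⟨x, hx, rfl⟩
    obtain ⟨A, hA, rfl⟩ := Edyadic_eq_image_midQ ▸ hx
    rcases I.midQ_mem_EIn_or_refine hA with hAI | ⟨i, u, p, d, j, hp, hj, hI, rfl⟩
    · exact J.EIn_subset_Edyadic (hγ.image_EIn ▸ Set.mem_image_of_mem γ hAI)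
    · obtain ⟨v, q, hq, hJ⟩ := J.exists_piece_eq_sdInterval i
      rw [hγ.apply_midQ_sdInterval_refine hI hJ hj]
      exact midQ_mem_Edyadic (sdInterval_mem_SDSet (mul_two_pow_add_lt hq hj))
  · obtain ⟨B, hB, rfl⟩ := Edyadic_eq_image_midQ ▸ hy
    rcases J.midQ_mem_EIn_or_refine hB with hBJ | ⟨i, v, q, d, j, hq, hj, hJ, rfl⟩
    · obtain ⟨x, hx, hxy⟩ := hγ.image_EIn ▸ hBJ
      exact ⟨x, I.EIn_subset_Edyadic hx, hxy⟩
    · obtain ⟨u, p, hp, hI⟩ := I.exists_piece_eq_sdInterval i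
      exact ⟨_, midQ_mem_Edyadic (sdInterval_mem_SDSet (mul_two_pow_add_lt hp hj)),
        hγ.apply_midQ_sdInterval_refine hI hJ hj⟩

theorem preservesSigns_iff {s : ℚ × ℚ → ℤ} (hs : SignSpec s) :
    PreservesSigns s γ ↔ ∀ A B : ℚ × ℚ, A ∈ SDSet → B ∈ SDSet → midQ A ∈ EIn I →
      γ (midQ A) = midQ B → s B = s A := by
  refine ⟨fun h A B hA hB _ hAB => h.2 A B hA hB hAB, fun h => ⟨hγ.image_Edyadic, ?_⟩⟩
  intro A B hA hB hAB
  rcases I.midQ_mem_EIn_or_refine hA with hAI | ⟨i, u, p, d, j, hp, hj, hI, rfl⟩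
  · exact h A B hA hB hAI hAB
  obtain ⟨v, q, hq, hJ⟩ := J.exists_piece_eq_sdInterval i
  have hpiece : s (sdInterval v q) = s (sdInterval u p) := by
    rw [← hI, ← hJ]
    exact h _ _ (I.sd i) (J.sd i) (Or.inl ⟨i, rfl⟩) (hγ.apply_midQ i)
  obtain rfl : B = sdInterval (v + d) (q * 2 ^ d + j) :=
    midQ_injOn_SDSet hB (sdInterval_mem_SDSet (mul_two_pow_add_lt hq hj))
      (hAB ▸ hγ.apply_midQ_sdInterval_refine hI hJ hj)
  rw [hs.apply_sdInterval_refine hp hj, hs.apply_sdInterval_refine hq hj, hpiece]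

end IsGamma

/-- `g = γ^I_J` preserves signs on `E` if and only if for every
`i`, the `i`-th smallest element of `E(I)` and the `i`-th smallest element of
`E(J)` have the same sign (the sign of a point of `E` being the sign of the
unique standard dyadic interval having it as midpoint). -/
theorem statement_16 {n : ℕ} (I J : SDPartition n) (s : ℚ × ℚ → ℤ)
    (hs : SignSpec s) (γ : ℚ → ℚ) (hγ : IsGamma I J γ)
    (eI eJ : Fin (2 * n - 1) → ℚ)
    (heI : StrictMono eI) (heIr : Set.range eI = EIn I)
    (heJ : StrictMono eJ) (heJr : Set.range eJ = EIn J) :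
    PreservesSigns s γ ↔
      ∀ i, ∀ A B : ℚ × ℚ, A ∈ SDSet → B ∈ SDSet →
        midQ A = eI i → midQ B = eJ i → s A = s B := by
  have hcomp : ∀ i, γ (eI i) = eJ i := congrFun (hγ.comp_eq_of_range heI heJ heIr heJr)
  rw [hγ.preservesSigns_iff hs]
  constructor
  · intro h i A B hA hB hAi hBi
    exact (h A B hA hB (heIr ▸ ⟨i, hAi.symm⟩) (by rw [hAi, hBi, hcomp])).symm
  · intro h A B hA hB hAI hAB
    obtain ⟨i, hi⟩ := heIr ▸ hAI
    exact (h i A B hA hB hi.symm (by rw [← hAB, ← hi, hcomp])).symm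
end
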